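/- arXiv:2408.08758 — 2 statements merged into one kernel-verified Lean document; each statement's English description precedes it below -/
import Mathlib

section
/- For an integral domain D, the following are equivalent: (1) D is a field; (2) the Anderson ring D[X]_A is a principal ideal domain; (3) D[X]_A is a valuation domain; (4) D[X]_A is a Bézout domain (every finitely generated ideal is principal). -/
/-!
Evaluation at `0` extends to a homomorphism `D[X]_A → D` whose kernel is generated by the prime
element `X`. In a Bézout domain an irreducible element is coprime to everything it does not
divide; as `X` divides no nonzero constant, every `d ≠ 0` of `D` satisfies `a * X + b * d = 1`,
and evaluating at `0` shows that `d` is a unit. Conversely, over a field `K` every polynomial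
with nonzero constant term divides one with constant term `1`, so `K[X]_A` is the localization of
the PID `K[X]` at the prime `(X)`, hence a discrete valuation ring.
-/

open Polynomial

/-- The multiplicative set `A = {f ∈ R[X] : f(0) = 1}` of polynomials
with constant term `1`. -/
def andersonSubmonoid (R : Type*) [CommRing R] : Submonoid (Polynomial R) where
  carrier := {f | f.coeff 0 = 1}
  one_mem' := by simp
  mul_mem' := by
    intro a b ha hb
    simp only [Set.mem_setOf_eq, Polynomial.mul_coeff_zero] at *
    rw [ha, hb, mul_one]

/-- The Anderson ring `R[X]_A`, the localization of `R[X]` at `A`. -/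
abbrev AndersonRing (R : Type*) [CommRing R] := Localization (andersonSubmonoid R)

/-- The canonical ring homomorphism `R → R[X]_A`. -/
noncomputable def andersonMap (R : Type*) [CommRing R] : R →+* AndersonRing R :=
  (algebraMap (Polynomial R) (AndersonRing R)).comp Polynomial.C

namespace AndersonRing

section CommRing

variable (R : Type*) [CommRing R]

noncomputable def evalZero : AndersonRing R →+* R :=
  IsLocalization.lift (M := andersonSubmonoid R) (g := constantCoeff) fun s => by
    simp [show (s : R[X]).coeff 0 = 1 from s.2]

variable {R}

@[simp]
lemma evalZero_algebraMap (f : R[X]) :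
    evalZero R (algebraMap R[X] (AndersonRing R) f) = f.coeff 0 :=
  IsLocalization.lift_eq _ f

lemma ker_evalZero :
    RingHom.ker (evalZero R) = Ideal.span {algebraMap R[X] (AndersonRing R) X} := by
  ext r
  obtain ⟨⟨f, s⟩, rfl⟩ := IsLocalization.mk'_surjective (andersonSubmonoid R) r
  simp only [RingHom.mem_ker, Ideal.mem_span_singleton]
  constructor
  · intro hr
    have hf : f.coeff 0 = 0 := by
      simpa [evalZero, IsLocalization.lift_mk'_spec] using hr
    obtain ⟨g, rfl⟩ := X_dvd_iff.mpr hf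
    exact ⟨_, (IsLocalization.mul_mk'_eq_mk'_of_mul X g s).symm⟩
  · rintro ⟨q, hq⟩
    simp [hq]

end CommRing

section IsDomain

variable {D : Type*} [CommRing D] [IsDomain D]

lemma andersonSubmonoid_le_nonZeroDivisors : andersonSubmonoid D ≤ nonZeroDivisors D[X] :=
  fun f hf => mem_nonZeroDivisors_of_ne_zero <| by
    rintro rfl
    exact zero_ne_one ((coeff_zero 0).symm.trans hf)

instance : IsDomain (AndersonRing D) :=
  IsLocalization.isDomain_localization andersonSubmonoid_le_nonZeroDivisors

instance : (Ideal.span {X} : Ideal D[X]).IsPrime :=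
  (Ideal.span_singleton_prime X_ne_zero).mpr Polynomial.prime_X

lemma prime_algebraMap_X : Prime (algebraMap D[X] (AndersonRing D) X) := by
  have hX : algebraMap D[X] (AndersonRing D) X ≠ 0 :=
    (map_ne_zero_iff _ (IsLocalization.injective _ andersonSubmonoid_le_nonZeroDivisors)).mpr
      X_ne_zero
  rw [← Ideal.span_singleton_prime hX, ← ker_evalZero]
  exact RingHom.ker_isPrime _

variable (D) in
lemma isField_of_isBezout [IsBezout (AndersonRing D)] : IsField D := by
  refine ⟨⟨0, 1, zero_ne_one⟩, mul_comm, fun {d} hd => ?_⟩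
  have hX_not_dvd : ¬ algebraMap D[X] (AndersonRing D) X ∣ algebraMap D[X] _ (C d) := by
    rintro ⟨q, hq⟩
    apply hd
    simpa using congrArg (evalZero D) hq
  obtain ⟨a, b, hab⟩ := prime_algebraMap_X.irreducible.coprime_iff_not_dvd.mpr hX_not_dvd
  exact ⟨evalZero D b, by simpa [mul_comm] using congrArg (evalZero D) hab⟩

end IsDomain

section Field

variable {K : Type*} [Field K]

instance : IsLocalization.AtPrime (AndersonRing K) (Ideal.span {X} : Ideal K[X]) := by
  refine IsLocalization.of_le_of_exists_dvd (andersonSubmonoid K) _ (fun f hf hX => ?_)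
    fun f hf => ⟨C (f.coeff 0)⁻¹ * f, ?_, dvd_mul_left _ _⟩
  · rw [SetLike.mem_coe, Ideal.mem_span_singleton, X_dvd_iff] at hX
    exact zero_ne_one (hX.symm.trans hf)
  · rw [Ideal.mem_primeCompl_iff, Ideal.mem_span_singleton, X_dvd_iff] at hf
    change (C (f.coeff 0)⁻¹ * f).coeff 0 = 1
    rw [mul_coeff_zero, coeff_C_zero, inv_mul_cancel₀ hf]

instance : IsDiscreteValuationRing (AndersonRing K) :=
  IsLocalization.AtPrime.isDiscreteValuationRing_of_dedekind_domain K[X]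
    (Ideal.span_singleton_eq_bot.not.mpr X_ne_zero) _

end Field

end AndersonRing

/-- For an integral domain `D`, the following are equivalent: `D` is a field;
`D[X]_A` is a PID; `D[X]_A` is a valuation domain; `D[X]_A` is a Bézout
domain. -/
theorem anderson_field_tfae (D : Type*) [CommRing D] [IsDomain D] :
    (IsField D ↔
      (∃ _ : IsDomain (AndersonRing D), IsPrincipalIdealRing (AndersonRing D))) ∧
    (IsField D ↔
      (∃ h : IsDomain (AndersonRing D), @ValuationRing (AndersonRing D) _ h)) ∧
    (IsField D ↔
      (∃ _ : IsDomain (AndersonRing D), IsBezout (AndersonRing D))) := by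
  have isDVR_of_isField (hD : IsField D) : IsDiscreteValuationRing (AndersonRing D) := by
    let := hD.toField
    infer_instance
  refine ⟨⟨fun hD => ?_, fun ⟨_, _⟩ => AndersonRing.isField_of_isBezout D⟩,
    ⟨fun hD => ?_, fun ⟨_, _⟩ => AndersonRing.isField_of_isBezout D⟩,
    ⟨fun hD => ?_, fun ⟨_, _⟩ => AndersonRing.isField_of_isBezout D⟩⟩ <;>
  · have := isDVR_of_isField hD
    exact ⟨inferInstance, inferInstance⟩
end

section
/- For any commutative ring R with identity, the Anderson ring R[X]_A is a faithfully flat R-module (via the canonical ring homomorphism R → R[X]_A). -/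
open Polynomial

/-! Being a localization of the free module `R[X]`, the Anderson ring is flat over `R`. Evaluation
at `0` sends every element of `A` to `1`, so it extends to an `R`-algebra retraction
`R[X]_A → R`. Hence `R[X]_A` is a flat module surjecting onto the faithfully flat module `R`,
and `I • R[X]_A = R[X]_A` would give `I = I • R = R` for an ideal `I`. -/

theorem Module.FaithfullyFlat.of_flat_of_surjective {R M N : Type*} [CommRing R]
    [AddCommGroup M] [Module R M] [AddCommGroup N] [Module R N] [Module.Flat R M]
    [Module.FaithfullyFlat R N] (f : M →ₗ[R] N) (hf : Function.Surjective f) :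
    Module.FaithfullyFlat R M := by
  refine (iff_flat_and_proper_ideal R M).2 ⟨inferInstance, fun I hI hIM => ?_⟩
  refine (iff_flat_and_proper_ideal R N).1 inferInstance |>.2 I hI ?_
  rw [← LinearMap.range_eq_top.2 hf, LinearMap.range_eq_map, ← Submodule.map_smul'', hIM]

theorem mem_andersonSubmonoid {R : Type*} [CommRing R] {f : R[X]} :
    f ∈ andersonSubmonoid R ↔ f.coeff 0 = 1 :=
  Iff.rfl

noncomputable def andersonEvalZero (R : Type*) [CommRing R] : AndersonRing R →ₐ[R] R :=
  IsLocalization.liftAlgHom (M := andersonSubmonoid R) (f := aeval (0 : R))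
    fun f => by simp [← coeff_zero_eq_aeval_zero, mem_andersonSubmonoid.1 f.2]

/-- The Anderson ring `R[X]_A` is a faithfully flat `R`-module. -/
theorem anderson_faithfullyFlat (R : Type*) [CommRing R] :
    Module.FaithfullyFlat R (AndersonRing R) :=
  have : Module.Flat R (AndersonRing R) := .trans R R[X] _
  .of_flat_of_surjective (andersonEvalZero R).toLinearMap
    fun r => ⟨algebraMap R _ r, (andersonEvalZero R).commutes r⟩
end
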